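/- Let g₁, g₂ be hyperbolic isometries of a simplicial tree whose axes γ₁, γ₂ intersect with opposite orientations along a path of length Δ with Δ < min{l(g₁), l(g₂)}. Then g₁g₂ is hyperbolic and l(g₁g₂) = l(g₁) + l(g₂) − 2Δ. -/

import Mathlib

/-!
Put `f = g₁ g₂`. The translation hypotheses say `q ∈ [p, g₁ p]` and `p ∈ [q, g₂ q]`, and the
segments `[w, g w]` with `w` on the axis of `g` lie on that axis. If `p` were not on the geodesic
`[g₁⁻¹ q, g₂ q]`, the geodesics from `p` to these two points would share a first edge `p v`;
then `v` lies on both axes, yet outside `[p, q]`. The same argument at `q`, now using that in a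
tree the first edge of a geodesic is unique, puts `q` on `[f⁻¹ q, f q]`. A vertex of a tree
lying between its images under `f⁻¹` and `f` satisfies `d(q, fⁿ q) = n d(q, f q)`, so it has
minimal displacement, and `ℓ(f) = d(q, f q) = d(q, g₁ p) + d(p, g₂ q) = (ℓ(g₁) - Δ) + (ℓ(g₂) - Δ)`,
which is positive because `Δ < min ℓ(g₁) ℓ(g₂)`.
-/

open SimpleGraph

variable {V : Type*}

/-- Translation length of a graph automorphism of `G` (min displacement over vertices). -/
noncomputable def ell (G : SimpleGraph V) (g : G ≃g G) : ℕ :=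
  sInf (Set.range fun x => G.dist x (g x))

/-- The set of vertices realizing the minimal displacement (the axis, for hyperbolic `g`). -/
def axisSet (G : SimpleGraph V) (g : G ≃g G) : Set V :=
  {x | G.dist x (g x) = ell G g}

/-- `g` acts without inversions: no edge is flipped. -/
def noInv (G : SimpleGraph V) (g : G ≃g G) : Prop :=
  ∀ x y, G.Adj x y → ¬(g x = y ∧ g y = x)

/-- The segment (geodesic) between `p` and `q` in the tree. -/
def seg (G : SimpleGraph V) (p q : V) : Set V :=
  {x | G.dist p x + G.dist x q = G.dist p q}

/-- The open segment between `p` and `q` (endpoints removed). -/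
def openSeg (G : SimpleGraph V) (p q : V) : Set V :=
  {x | x ∈ seg G p q ∧ x ≠ p ∧ x ≠ q}

/-- Distance from a vertex to a set of vertices. -/
noncomputable def distToSet (G : SimpleGraph V) (x : V) (S : Set V) : ℕ :=
  sInf (G.dist x '' S)

/-- Distance between two sets of vertices. -/
noncomputable def setDist (G : SimpleGraph V) (S T : Set V) : ℕ :=
  sInf (Set.image2 G.dist S T)

/-- The projection of `B` onto `A`: points of `A` at minimal distance from `B`. -/
noncomputable def projOn (G : SimpleGraph V) (A B : Set V) : Set V :=
  {x | x ∈ A ∧ distToSet G x B = setDist G A B}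

/-- `g` translates the vertex `p` (assumed on its axis) towards the vertex `q`. -/
noncomputable def translatesToward (G : SimpleGraph V) (g : G ≃g G) (p q : V) : Prop :=
  (G.dist (g p) q : ℤ) = |(G.dist p q : ℤ) - (ell G g : ℤ)|

namespace SimpleGraph

variable {G : SimpleGraph V}

theorem mem_seg {a b x : V} : x ∈ seg G a b ↔ G.dist a x + G.dist x b = G.dist a b := Iff.rfl

theorem left_mem_seg (a b : V) : a ∈ seg G a b := by
  simp [mem_seg]

theorem right_mem_seg (a b : V) : b ∈ seg G a b := by
  simp [mem_seg]

theorem seg_comm (a b : V) : seg G a b = seg G b a := by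
  ext x
  have h₁ : G.dist a x = G.dist x a := dist_comm
  have h₂ : G.dist x b = G.dist b x := dist_comm
  have h₃ : G.dist a b = G.dist b a := dist_comm
  simp only [mem_seg]
  omega

theorem mem_seg_of_adj {b v c : V} (hv : G.Adj b v) (hvc : G.dist v c + 1 = G.dist b c) :
    v ∈ seg G b c := by
  rw [mem_seg, dist_eq_one_iff_adj.mpr hv]
  omega

theorem Connected.mem_seg_trans (hG : G.Connected) {a b c x : V} (hb : b ∈ seg G a c)
    (hx : x ∈ seg G b c) : x ∈ seg G a c ∧ b ∈ seg G a x := by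
  simp only [mem_seg] at *
  have := hG.dist_triangle (u := a) (v := b) (w := x)
  have := hG.dist_triangle (u := a) (v := x) (w := c)
  omega

theorem Connected.eq_of_mem_seg_of_mem_seg (hG : G.Connected) {a b x : V}
    (hx : x ∈ seg G a b) (hb : b ∈ seg G a x) : x = b := by
  rw [mem_seg] at hx hb
  exact hG.dist_eq_zero_iff.mp (by omega)

theorem Iso.dist_map {W : Type*} {G' : SimpleGraph W} (g : G ≃g G') (a b : V) :
    G'.dist (g a) (g b) = G.dist a b := by
  by_cases h : G.Reachable a b
  · obtain ⟨w, hw⟩ := h.exists_walk_length_eq_dist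
    obtain ⟨w', hw'⟩ := (h.map g.toHom).exists_walk_length_eq_dist
    refine le_antisymm ?_ ?_
    · simpa [hw] using dist_le (w.map g.toHom)
    · simpa [hw'] using dist_le (w'.map g.symm.toHom)
  · have h' : ¬G'.Reachable (g a) (g b) := fun h' => h (by simpa using h'.map g.symm.toHom)
    rw [dist_eq_zero_of_not_reachable h, dist_eq_zero_of_not_reachable h']

theorem Iso.apply_mem_seg_iff {W : Type*} {G' : SimpleGraph W} (g : G ≃g G') {a b x : V} :
    g x ∈ seg G' (g a) (g b) ↔ x ∈ seg G a b := by
  simp only [mem_seg, Iso.dist_map]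

theorem exists_adj_dist_add_one {x y : V} (h : G.dist x y ≠ 0) :
    ∃ v, G.Adj x v ∧ G.dist v y + 1 = G.dist x y := by
  obtain ⟨w, hw⟩ := (Reachable.of_dist_ne_zero h).exists_walk_length_eq_dist
  cases w with
  | nil => simp at h
  | @cons _ v _ hxv w' =>
    refine ⟨v, hxv, le_antisymm ?_ ?_⟩
    · have := dist_le w'
      rw [Walk.length_cons] at hw
      omega
    · have := hxv.reachable.dist_triangle_left y
      rw [dist_eq_one_iff_adj.mpr hxv] at this
      omega

theorem IsTree.eq_of_adj_of_mem_seg (hT : G.IsTree) {x z u₁ u₂ : V} (h₁ : G.Adj x u₁)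
    (h₂ : G.Adj x u₂) (hu₁ : u₁ ∈ seg G x z) (hu₂ : u₂ ∈ seg G x z) : u₁ = u₂ := by
  have path_through : ∀ {u}, G.Adj x u → u ∈ seg G x z →
      ∃ w : G.Walk x z, w.IsPath ∧ w.snd = u := by
    intro u hu hseg
    obtain ⟨P, hP⟩ := hT.connected.exists_walk_length_eq_dist u z
    refine ⟨.cons hu P, Walk.isPath_of_length_eq_dist _ ?_, by simp⟩
    rw [mem_seg, dist_eq_one_iff_adj.mpr hu] at hseg
    rw [Walk.length_cons, hP]
    omega
  obtain ⟨w₁, hw₁, rfl⟩ := path_through h₁ hu₁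
  obtain ⟨w₂, hw₂, rfl⟩ := path_through h₂ hu₂
  rw [(hT.existsUnique_path x z).unique hw₁ hw₂]

theorem IsTree.exists_adj_mem_seg_of_not_mem_seg (hT : G.IsTree) {a b c : V}
    (h : b ∉ seg G a c) : ∃ v, G.Adj b v ∧ v ∈ seg G b a ∧ v ∈ seg G b c := by
  obtain ⟨n, hn⟩ : ∃ n, G.dist b c = n := ⟨_, rfl⟩
  induction n generalizing b with
  | zero =>
    rw [hT.connected.dist_eq_zero_iff] at hn
    subst hn
    exact absurd (right_mem_seg a b) h
  | succ n ih =>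
    obtain ⟨u, hbu, hu⟩ := exists_adj_dist_add_one (hn.trans_ne n.succ_ne_zero)
    have hu_seg := mem_seg_of_adj hbu hu
    have hbu₁ : G.dist b u = 1 := dist_eq_one_iff_adj.mpr hbu
    have hab : G.dist a b = G.dist b a := dist_comm
    have hau : G.dist a u = G.dist u a := dist_comm
    rcases hT.dist_eq_dist_add_one_of_adj a hbu with hua | hua
    · exact ⟨u, hbu, by rw [mem_seg]; omega, hu_seg⟩
    obtain ⟨w, huw, hw₁, hw₂⟩ := ih (b := u) (by rw [mem_seg] at h ⊢; omega) (by omega)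
    have hwb : w = b := hT.eq_of_adj_of_mem_seg huw hbu.symm hw₁
      (mem_seg_of_adj hbu.symm (by omega))
    rw [hwb, mem_seg, dist_comm, hbu₁] at hw₂
    omega

theorem IsTree.mem_seg_of_adj_of_mem_seg (hT : G.IsTree) {a b c v : V} (hb : b ∈ seg G a c)
    (hab : a ≠ b) (hv : G.Adj a v) (hvc : v ∈ seg G a c) : v ∈ seg G a b := by
  obtain ⟨u, hau, hu⟩ := exists_adj_dist_add_one (hT.connected.dist_eq_zero_iff.not.2 hab)
  have hu_seg := mem_seg_of_adj hau hu
  suffices u = v from this ▸ hu_seg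
  refine hT.eq_of_adj_of_mem_seg hau hv ?_ hvc
  have := hT.connected.dist_triangle (u := u) (v := b) (w := c)
  have := hT.connected.dist_triangle (u := a) (v := u) (w := c)
  rw [mem_seg] at hb hu_seg ⊢
  omega

theorem IsTree.dist_eq_add_add_of_mem_seg (hT : G.IsTree) {a b c d : V} (hb : b ∈ seg G a c)
    (hc : c ∈ seg G b d) (hbc : b ≠ c) :
    G.dist a d = G.dist a b + G.dist b c + G.dist c d := by
  suffices hbd : b ∈ seg G a d by
    rw [mem_seg] at hc hbd
    omega
  by_contra h
  obtain ⟨v, hbv, hva, hvd⟩ := hT.exists_adj_mem_seg_of_not_mem_seg h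
  have hvc := hT.mem_seg_of_adj_of_mem_seg hc hbc hbv hvd
  have := hT.connected.dist_triangle (u := a) (v := v) (w := c)
  have : G.dist a b = G.dist b a := dist_comm
  have : G.dist a v = G.dist v a := dist_comm
  have := dist_eq_one_iff_adj.mpr hbv
  rw [mem_seg] at hb hva hvc
  omega

theorem IsTree.dist_eq_mul_of_mem_seg (hT : G.IsTree) (x : ℕ → V) {D : ℕ}
    (hD : ∀ k, G.dist (x k) (x (k + 1)) = D) (hx : ∀ k, x (k + 1) ∈ seg G (x k) (x (k + 2)))
    (n : ℕ) : G.dist (x 0) (x n) = n * D := by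
  suffices ∀ n, G.dist (x 0) (x n) = n * D ∧ G.dist (x 0) (x (n + 1)) = (n + 1) * D from
    (this n).1
  intro n
  induction n with
  | zero => simp [hD 0]
  | succ n ih =>
    refine ⟨ih.2, ?_⟩
    by_cases hne : x n = x (n + 1)
    · have hD0 : D = 0 := by rw [← hD n, hne, dist_self]
      have := hT.connected.dist_triangle (u := x 0) (v := x (n + 1)) (w := x (n + 2))
      rw [ih.2, hD, hD0] at this
      simpa [hD0] using this
    · have hb : x n ∈ seg G (x 0) (x (n + 1)) := by
        rw [mem_seg, ih.1, ih.2, hD]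
        ring
      rw [hT.dist_eq_add_add_of_mem_seg hb (hx n) hne, ih.1, hD, hD]
      ring

theorem mem_axisSet_iff {g : G ≃g G} {x : V} : x ∈ axisSet G g ↔ G.dist x (g x) = ell G g :=
  Iff.rfl

theorem ell_le_dist (g : G ≃g G) (x : V) : ell G g ≤ G.dist x (g x) :=
  Nat.sInf_le ⟨x, rfl⟩

theorem ell_eq_dist_of_forall_le {g : G ≃g G} {q : V}
    (h : ∀ y, G.dist q (g q) ≤ G.dist y (g y)) : ell G g = G.dist q (g q) :=
  le_antisymm (ell_le_dist g q) (le_csInf ⟨_, q, rfl⟩ (by rintro _ ⟨y, rfl⟩; exact h y))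

theorem symm_apply_mem_axisSet {g : G ≃g G} {w : V} (hw : w ∈ axisSet G g) :
    g.symm w ∈ axisSet G g := by
  rw [mem_axisSet_iff, ← hw, g.apply_symm_apply, ← g.dist_map, g.apply_symm_apply]

theorem Connected.mem_axisSet_of_mem_seg (hG : G.Connected) {g : G ≃g G} {w z : V}
    (hw : w ∈ axisSet G g) (hz : z ∈ seg G w (g w)) : z ∈ axisSet G g := by
  have := hG.dist_triangle (u := z) (v := g w) (w := g z)
  have := g.dist_map w z
  have := ell_le_dist g z
  rw [mem_axisSet_iff] at hw ⊢
  rw [mem_seg] at hz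
  omega

theorem mem_seg_of_translatesToward {g : G ≃g G} {p q : V} (hp : p ∈ axisSet G g)
    (hle : G.dist p q ≤ ell G g) (h : translatesToward G g p q) : q ∈ seg G p (g p) := by
  rw [translatesToward, abs_of_nonpos (by omega), dist_comm] at h
  rw [mem_axisSet_iff] at hp
  rw [mem_seg]
  omega

theorem mem_seg_symm_apply_of_mem_seg {g : G ≃g G} {p q : V} (hp : p ∈ axisSet G g)
    (hq : q ∈ axisSet G g) (h : p ∈ seg G q (g q)) : q ∈ seg G (g.symm p) p := by
  have h₁ := g.dist_map (g.symm p) q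
  have h₂ := mem_axisSet_iff.1 (symm_apply_mem_axisSet hp)
  rw [g.apply_symm_apply] at h₁ h₂
  rw [mem_axisSet_iff] at hq
  rw [mem_seg] at h ⊢
  have : G.dist q p = G.dist p q := dist_comm
  omega

theorem Connected.dist_pow_apply_le (hG : G.Connected) (f : G ≃g G) (y : V) (n : ℕ) :
    G.dist y ((f ^ n) y) ≤ n * G.dist y (f y) := by
  induction n with
  | zero => simp
  | succ n ih =>
    have := hG.dist_triangle (u := y) (v := (f ^ n) y) (w := (f ^ n) (f y))
    rw [(f ^ n).dist_map] at this
    rw [pow_succ, RelIso.mul_apply]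
    linarith

theorem IsTree.dist_pow_apply (hT : G.IsTree) (f : G ≃g G) {q : V}
    (hq : q ∈ seg G (f.symm q) (f q)) (n : ℕ) : G.dist q ((f ^ n) q) = n * G.dist q (f q) := by
  refine hT.dist_eq_mul_of_mem_seg (fun k => (f ^ k) q) (fun k => ?_) (fun k => ?_) n
  · simp only [pow_succ, RelIso.mul_apply, (f ^ k).dist_map]
  · simpa [pow_succ, RelIso.mul_apply] using
      ((f ^ (k + 1)).apply_mem_seg_iff).2 hq

theorem IsTree.ell_eq_dist_of_mem_seg (hT : G.IsTree) (f : G ≃g G) {q : V}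
    (hq : q ∈ seg G (f.symm q) (f q)) : ell G f = G.dist q (f q) := by
  -- `d(q, fⁿ q) = n d(q, f q)`, while `d(q, fⁿ q) ≤ 2 d(q, y) + n d(y, f y)`.
  refine ell_eq_dist_of_forall_le fun y => ?_
  by_contra! hlt
  obtain ⟨n, hn⟩ : ∃ n, n = 2 * G.dist q y + 1 := ⟨_, rfl⟩
  have hq_growth := hT.dist_pow_apply f hq n
  have hy_growth := hT.connected.dist_pow_apply_le f y n
  have := hT.connected.dist_triangle (u := q) (v := y) (w := (f ^ n) q)
  have := hT.connected.dist_triangle (u := y) (v := (f ^ n) y) (w := (f ^ n) q)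
  have := (f ^ n).dist_map y q
  have : G.dist q y = G.dist y q := dist_comm
  have : n * (G.dist y (f y) + 1) ≤ n * G.dist q (f q) := Nat.mul_le_mul_left n hlt
  rw [mul_add, mul_one] at this
  omega

section Product

variable {g₁ g₂ : G ≃g G} {p q : V}

theorem IsTree.mem_seg_symm_apply_apply (hT : G.IsTree)
    (hseg : axisSet G g₁ ∩ axisSet G g₂ = seg G p q)
    (hq₁ : q ∈ seg G p (g₁ p)) (hp₂ : p ∈ seg G q (g₂ q)) :
    p ∈ seg G (g₁.symm q) (g₂ q) := by
  have hG := hT.connected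
  have hp : p ∈ axisSet G g₁ ∩ axisSet G g₂ := hseg ▸ left_mem_seg p q
  have hq : q ∈ axisSet G g₁ ∩ axisSet G g₂ := hseg ▸ right_mem_seg p q
  by_contra h
  obtain ⟨v, hpv, hv₁, hv₂⟩ := hT.exists_adj_mem_seg_of_not_mem_seg h
  have hv_axis₁ : v ∈ axisSet G g₁ := by
    have h₁ : g₁.symm q ∈ seg G (g₁.symm p) p := by
      simpa using g₁.symm.apply_mem_seg_iff.2 hq₁
    refine hG.mem_axisSet_of_mem_seg (symm_apply_mem_axisSet hp.1) ?_
    rw [g₁.apply_symm_apply]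
    exact (hG.mem_seg_trans h₁ (seg_comm p _ ▸ hv₁)).1
  obtain ⟨hv_seg₂, hp_seg⟩ := hG.mem_seg_trans hp₂ hv₂
  have hv : v ∈ seg G q p :=
    seg_comm p q ▸ hseg ▸ ⟨hv_axis₁, hG.mem_axisSet_of_mem_seg hq.2 hv_seg₂⟩
  exact hpv.ne (hG.eq_of_mem_seg_of_mem_seg hv hp_seg).symm

theorem IsTree.mem_seg_mul_symm_apply_mul_apply (hT : G.IsTree)
    (hseg : axisSet G g₁ ∩ axisSet G g₂ = seg G p q)
    (hq₁ : q ∈ seg G p (g₁ p)) (hp₂ : p ∈ seg G q (g₂ q)) (hne₁ : q ≠ g₁ p) (hne₂ : p ≠ g₂ q) :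
    q ∈ seg G ((g₁ * g₂).symm q) ((g₁ * g₂) q) := by
  have hG := hT.connected
  have hp : p ∈ axisSet G g₁ ∩ axisSet G g₂ := hseg ▸ left_mem_seg p q
  have hq : q ∈ axisSet G g₁ ∩ axisSet G g₂ := hseg ▸ right_mem_seg p q
  have hA := hT.mem_seg_symm_apply_apply hseg hq₁ hp₂
  have hA₁ : g₁ p ∈ seg G q ((g₁ * g₂) q) := by
    simpa using g₁.apply_mem_seg_iff.2 hA
  have hA₂ : g₂.symm p ∈ seg G q ((g₁ * g₂).symm q) := by
    rw [seg_comm]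
    have := g₂.symm.apply_mem_seg_iff.2 hA
    rwa [RelIso.symm_apply_apply] at this
  by_contra h
  obtain ⟨v, hqv, hv₁, hv₂⟩ := hT.exists_adj_mem_seg_of_not_mem_seg h
  obtain ⟨hv_seg₁, hq_seg⟩ := hG.mem_seg_trans hq₁ (hT.mem_seg_of_adj_of_mem_seg hA₁ hne₁ hqv hv₂)
  have hv_axis₂ : v ∈ axisSet G g₂ := by
    have h₂ : q ∈ seg G p (g₂.symm p) := seg_comm _ p ▸ mem_seg_symm_apply_of_mem_seg hp.2 hq.2 hp₂
    have hne₂' : q ≠ g₂.symm p := fun h => hne₂ (by rw [h, g₂.apply_symm_apply])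
    refine hG.mem_axisSet_of_mem_seg (symm_apply_mem_axisSet hp.2) ?_
    rw [g₂.apply_symm_apply, seg_comm]
    exact (hG.mem_seg_trans h₂ (hT.mem_seg_of_adj_of_mem_seg hA₂ hne₂' hqv hv₁)).1
  have hv : v ∈ seg G p q := hseg ▸ ⟨hG.mem_axisSet_of_mem_seg hp.1 hv_seg₁, hv_axis₂⟩
  exact hqv.ne (hG.eq_of_mem_seg_of_mem_seg hv hq_seg).symm

end Product

end SimpleGraph

theorem stmt6_general (G : SimpleGraph V) (hT : G.IsTree) (g₁ g₂ : G ≃g G)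
    (p q : V) (Δ : ℕ)
    (hseg : axisSet G g₁ ∩ axisSet G g₂ = seg G p q)
    (hΔ : G.dist p q = Δ)
    (hd₁ : translatesToward G g₁ p q) (hd₂ : translatesToward G g₂ q p)
    (hlt : Δ < min (ell G g₁) (ell G g₂)) :
    0 < ell G (g₁ * g₂) ∧
    (ell G (g₁ * g₂) : ℤ) = (ell G g₁ : ℤ) + (ell G g₂ : ℤ) - 2 * Δ := by
  have hp : p ∈ axisSet G g₁ ∩ axisSet G g₂ := hseg ▸ left_mem_seg p q
  have hq : q ∈ axisSet G g₁ ∩ axisSet G g₂ := hseg ▸ right_mem_seg p q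
  have hqp : G.dist q p = Δ := dist_comm.trans hΔ
  have hq₁ : q ∈ seg G p (g₁ p) := mem_seg_of_translatesToward hp.1 (by omega) hd₁
  have hp₂ : p ∈ seg G q (g₂ q) := mem_seg_of_translatesToward hq.2 (by omega) hd₂
  have hq₁_dist : G.dist p q + G.dist q (g₁ p) = ell G g₁ := hq₁.trans hp.1
  have hp₂_dist : G.dist q p + G.dist p (g₂ q) = ell G g₂ := hp₂.trans hq.2
  have hne₁ : q ≠ g₁ p := by rintro rfl; rw [dist_self] at hq₁_dist; omega
  have hne₂ : p ≠ g₂ q := by rintro rfl; rw [dist_self] at hp₂_dist; omega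
  have hA := hT.mem_seg_symm_apply_apply hseg hq₁ hp₂
  have hell := hT.ell_eq_dist_of_mem_seg (g₁ * g₂)
    (hT.mem_seg_mul_symm_apply_mul_apply hseg hq₁ hp₂ hne₁ hne₂)
  have hlen : G.dist q ((g₁ * g₂) q) = G.dist q (g₁ p) + G.dist p (g₂ q) := by
    have := g₁.apply_mem_seg_iff.2 hA
    rw [g₁.apply_symm_apply, mem_seg, g₁.dist_map] at this
    exact this.symm
  omega

/-- Opposite orientations, overlap of length Δ strictly less than both translation
lengths: the product is hyperbolic of translation length l(g₁) + l(g₂) - 2Δ. -/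
theorem stmt6 (G : SimpleGraph V) (hT : G.IsTree) (g₁ g₂ : G ≃g G)
    (h₁ : noInv G g₁) (h₂ : noInv G g₂)
    (hyp₁ : 0 < ell G g₁) (hyp₂ : 0 < ell G g₂)
    (p q : V) (Δ : ℕ)
    (hseg : axisSet G g₁ ∩ axisSet G g₂ = seg G p q)
    (hΔ : G.dist p q = Δ)
    (hd₁ : translatesToward G g₁ p q) (hd₂ : translatesToward G g₂ q p)
    (hlt : Δ < min (ell G g₁) (ell G g₂)) :
    0 < ell G (g₁ * g₂) ∧
    (ell G (g₁ * g₂) : ℤ) = (ell G g₁ : ℤ) + (ell G g₂ : ℤ) - 2 * Δ :=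
  stmt6_general G hT g₁ g₂ p q Δ hseg hΔ hd₁ hd₂ hlt
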